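/- For every Boolean matrix I there exists a set F of formal concepts with F ⊆ B_E(I), |F| = rank_B(I), and A_F ∘ B_F = I, where B_E(I) is the union of the intervals I_{ij} over all (i,j) with (E(I))_{ij} = 1. -/

import Mathlib

/-- `C↑`: attributes shared by all objects in `C`. -/
def up {n m : ℕ} (I : Fin n → Fin m → Bool) (C : Finset (Fin n)) : Finset (Fin m) :=
  Finset.univ.filter fun j => ∀ i ∈ C, I i j = true

/-- `D↓`: objects sharing all attributes in `D`. -/
def dn {n m : ℕ} (I : Fin n → Fin m → Bool) (D : Finset (Fin m)) : Finset (Fin n) :=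
  Finset.univ.filter fun i => ∀ j ∈ D, I i j = true

/-- A formal concept of `I`: a pair `⟨C,D⟩` with `C↑ = D` and `D↓ = C`. -/
def isConcept {n m : ℕ} (I : Fin n → Fin m → Bool)
    (p : Finset (Fin n) × Finset (Fin m)) : Prop :=
  up I p.1 = p.2 ∧ dn I p.2 = p.1

/-- The interval `[γ(C), μ(D)]` in the concept lattice of `I`
(concepts ordered by extent inclusion). -/
def interval {n m : ℕ} (I : Fin n → Fin m → Bool)
    (C : Finset (Fin n)) (D : Finset (Fin m)) :
    Set (Finset (Fin n) × Finset (Fin m)) :=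
  {p | isConcept I p ∧ dn I (up I C) ⊆ p.1 ∧ p.1 ⊆ dn I D}

/-- The Boolean matrix `A_F ∘ B_F` determined by a set `F` of concepts:
entry `(i,j)` is 1 iff some concept in `F` covers `(i,j)`. -/
def cov {n m : ℕ} (F : Finset (Finset (Fin n) × Finset (Fin m))) :
    Fin n → Fin m → Bool :=
  fun i j => decide (∃ p ∈ F, i ∈ p.1 ∧ j ∈ p.2)

/-- The essential part `E(I)`: entry `(i,j)` is 1 iff the interval `I_{ij}` is
non-empty and inclusion-minimal among the non-empty intervals `I_{i'j'}`. -/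
noncomputable def Ess {n m : ℕ} (I : Fin n → Fin m → Bool) : Fin n → Fin m → Bool :=
  fun i j =>
    @decide ((interval I {i} {j}).Nonempty ∧
      ∀ (i' : Fin n) (j' : Fin m), (interval I {i'} {j'}).Nonempty →
        interval I {i'} {j'} ⊆ interval I {i} {j} →
        interval I {i'} {j'} = interval I {i} {j})
      (Classical.propDecidable _)

/-- Boolean matrix product. -/
def bmul {n k m : ℕ} (A : Fin n → Fin k → Bool) (B : Fin k → Fin m → Bool) :
    Fin n → Fin m → Bool := fun i j => decide (∃ l, A i l = true ∧ B l j = true)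

/-- The Boolean (Schein) rank: the least `k` admitting a Boolean factorization
with inner dimension `k`. -/
noncomputable def rankB {n m : ℕ} (M : Fin n → Fin m → Bool) : ℕ :=
  sInf {k | ∃ (A : Fin n → Fin k → Bool) (B : Fin k → Fin m → Bool), M = bmul A B}

/-- `B_E(I)`: the union of the intervals `I_{ij}` over essential entries `(i,j)`. -/
def BE {n m : ℕ} (I : Fin n → Fin m → Bool) : Set (Finset (Fin n) × Finset (Fin m)) :=
  {p | ∃ i j, Ess I i j = true ∧ p ∈ interval I {i} {j}}

/-
An optimal factorization may be assumed to consist of formal concepts (replace each factor by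
the concept its extent generates). In an optimal family `F` of concepts every `c ∈ F` has an
entry `(i,j)` of `I` that no other member of `F` covers, since otherwise `F \ {c}` would be a
smaller factorization. The interval `I_{ij}` contains an inclusion-minimal non-empty interval
`I_{ef}`, i.e. an essential entry `(e,f)`; some `d ∈ F` covers `(e,f)`, so `d ∈ I_{ef} ⊆ I_{ij}`
covers `(i,j)`, hence `d = c` and `c ∈ B_E(I)`.
-/

section FormalConcepts

variable {n m : ℕ} (I : Fin n → Fin m → Bool)

lemma mem_up {C : Finset (Fin n)} {j : Fin m} : j ∈ up I C ↔ ∀ i ∈ C, I i j = true := by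
  simp [up]

lemma mem_dn {D : Finset (Fin m)} {i : Fin n} : i ∈ dn I D ↔ ∀ j ∈ D, I i j = true := by
  simp [dn]

lemma subset_dn_up (C : Finset (Fin n)) : C ⊆ dn I (up I C) :=
  fun i hi => (mem_dn I).2 fun _ hj => (mem_up I).1 hj i hi

lemma subset_up_dn (D : Finset (Fin m)) : D ⊆ up I (dn I D) :=
  fun j hj => (mem_up I).2 fun _ hi => (mem_dn I).1 hi j hj

lemma up_anti {C C' : Finset (Fin n)} (h : C ⊆ C') : up I C' ⊆ up I C :=
  fun _ hj => (mem_up I).2 fun i hi => (mem_up I).1 hj i (h hi)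

lemma dn_anti {D D' : Finset (Fin m)} (h : D ⊆ D') : dn I D' ⊆ dn I D :=
  fun _ hi => (mem_dn I).2 fun j hj => (mem_dn I).1 hi j (h hj)

lemma isConcept_dn_up (C : Finset (Fin n)) : isConcept I (dn I (up I C), up I C) :=
  ⟨(up_anti I (subset_dn_up I C)).antisymm (subset_up_dn I _), rfl⟩

lemma apply_eq_true_of_mem_dn {D : Finset (Fin m)} {i : Fin n} {j : Fin m}
    (hi : i ∈ dn I D) (hj : j ∈ D) : I i j = true :=
  (mem_dn I).1 hi j hj

lemma mem_interval_singleton_iff {p : Finset (Fin n) × Finset (Fin m)} (hp : isConcept I p)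
    {i : Fin n} {j : Fin m} : p ∈ interval I {i} {j} ↔ i ∈ p.1 ∧ j ∈ p.2 := by
  obtain ⟨hup, hdn⟩ := hp
  constructor
  · rintro ⟨-, hi, hj⟩
    refine ⟨hi (subset_dn_up I _ (Finset.mem_singleton_self i)), hup ▸ (mem_up I).2 ?_⟩
    exact fun i' hi' => apply_eq_true_of_mem_dn I (hj hi') (Finset.mem_singleton_self j)
  · rintro ⟨hi, hj⟩
    refine ⟨⟨hup, hdn⟩, hdn ▸ dn_anti I fun j' hj' => (mem_up I).2 ?_, fun i' hi' => (mem_dn I).2 ?_⟩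
    · intro _ h
      exact Finset.mem_singleton.1 h ▸ apply_eq_true_of_mem_dn I (hdn ▸ hi) hj'
    · intro _ h
      exact Finset.mem_singleton.1 h ▸ apply_eq_true_of_mem_dn I (hdn ▸ hi') hj

lemma interval_singleton_nonempty_iff {i : Fin n} {j : Fin m} :
    (interval I {i} {j}).Nonempty ↔ I i j = true := by
  constructor
  · rintro ⟨p, hp, hpij⟩
    obtain ⟨hi, hj⟩ := (mem_interval_singleton_iff I hp).1 ⟨hp, hpij⟩
    exact apply_eq_true_of_mem_dn I (hp.2 ▸ hi) hj
  · intro hij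
    refine ⟨_, (mem_interval_singleton_iff I (isConcept_dn_up I {i})).2
      ⟨subset_dn_up I _ (Finset.mem_singleton_self i), (mem_up I).2 ?_⟩⟩
    intro _ h
    exact Finset.mem_singleton.1 h ▸ hij

lemma ess_eq_true_iff {i : Fin n} {j : Fin m} :
    Ess I i j = true ↔ (interval I {i} {j}).Nonempty ∧
      ∀ (i' : Fin n) (j' : Fin m), (interval I {i'} {j'}).Nonempty →
        interval I {i'} {j'} ⊆ interval I {i} {j} → interval I {i'} {j'} = interval I {i} {j} :=
  @decide_eq_true_iff _ (Classical.propDecidable _)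

lemma exists_ess_interval_subset {i : Fin n} {j : Fin m} (hij : (interval I {i} {j}).Nonempty) :
    ∃ e f, Ess I e f = true ∧ interval I {e} {f} ⊆ interval I {i} {j} := by
  obtain ⟨⟨e, f⟩, ⟨hne, hsub⟩, hmin⟩ := exists_minimalFor_of_wellFoundedLT
    (fun q : Fin n × Fin m => (interval I {q.1} {q.2}).Nonempty ∧
      interval I {q.1} {q.2} ⊆ interval I {i} {j})
    (fun q => interval I {q.1} {q.2}) ⟨(i, j), hij, subset_rfl⟩
  refine ⟨e, f, (ess_eq_true_iff I).2 ⟨hne, fun i' j' hne' hsub' => ?_⟩, hsub⟩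
  exact hsub'.antisymm (hmin (j := (i', j')) ⟨hne', hsub'.trans hsub⟩ hsub')

end FormalConcepts

section BooleanFactorization

variable {n m : ℕ}

lemma cov_eq_true_iff {F : Finset (Finset (Fin n) × Finset (Fin m))} {i : Fin n} {j : Fin m} :
    cov F i j = true ↔ ∃ p ∈ F, i ∈ p.1 ∧ j ∈ p.2 := by
  simp [cov]

lemma bmul_eq_true_iff {k : ℕ} {A : Fin n → Fin k → Bool} {B : Fin k → Fin m → Bool}
    {i : Fin n} {j : Fin m} : bmul A B i j = true ↔ ∃ l, A i l = true ∧ B l j = true := by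
  simp [bmul]

/-- `A_F` of the paper, the members of `F` being enumerated by `F.equivFin`. -/
noncomputable def extentMatrix (F : Finset (Finset (Fin n) × Finset (Fin m))) : Fin n → Fin F.card → Bool :=
  fun i l => decide (i ∈ (F.equivFin.symm l : Finset (Fin n) × Finset (Fin m)).1)

/-- `B_F` of the paper. -/
noncomputable def intentMatrix (F : Finset (Finset (Fin n) × Finset (Fin m))) : Fin F.card → Fin m → Bool :=
  fun l j => decide (j ∈ (F.equivFin.symm l : Finset (Fin n) × Finset (Fin m)).2)

lemma bmul_extentMatrix_intentMatrix (F : Finset (Finset (Fin n) × Finset (Fin m))) :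
    bmul (extentMatrix F) (intentMatrix F) = cov F := by
  funext i j
  rw [Bool.eq_iff_iff, bmul_eq_true_iff, cov_eq_true_iff]
  simp only [extentMatrix, intentMatrix, decide_eq_true_eq]
  constructor
  · rintro ⟨l, hi, hj⟩
    exact ⟨_, (F.equivFin.symm l).2, hi, hj⟩
  · rintro ⟨p, hp, hi, hj⟩
    exact ⟨F.equivFin ⟨p, hp⟩, by simpa using hi, by simpa using hj⟩

lemma rankB_le_card_of_cov_eq {I : Fin n → Fin m → Bool}
    {F : Finset (Finset (Fin n) × Finset (Fin m))} (h : cov F = I) : rankB I ≤ F.card :=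
  Nat.sInf_le ⟨_, _, (h ▸ bmul_extentMatrix_intentMatrix F).symm⟩

lemma exists_bmul_eq_of_rankB (I : Fin n → Fin m → Bool) :
    ∃ (A : Fin n → Fin (rankB I) → Bool) (B : Fin (rankB I) → Fin m → Bool), I = bmul A B := by
  have hid : I = bmul I fun l j => decide (l = j) := by
    funext i j
    rw [Bool.eq_iff_iff, bmul_eq_true_iff]
    simp
  exact Nat.sInf_mem (s := {k | ∃ (A : Fin n → Fin k → Bool) (B : Fin k → Fin m → Bool),
    I = bmul A B}) ⟨m, I, _, hid⟩

end BooleanFactorization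

section OptimalConceptFactorization

variable {n m : ℕ} (I : Fin n → Fin m → Bool)

def conceptsOfFactor {k : ℕ} (A : Fin n → Fin k → Bool) :
    Finset (Finset (Fin n) × Finset (Fin m)) :=
  Finset.univ.image fun l =>
    (dn I (up I (Finset.univ.filter (A · l = true))), up I (Finset.univ.filter (A · l = true)))

lemma cov_conceptsOfFactor {k : ℕ} {A : Fin n → Fin k → Bool} {B : Fin k → Fin m → Bool}
    (h : I = bmul A B) : cov (conceptsOfFactor I A) = I := by
  funext i j
  rw [Bool.eq_iff_iff, cov_eq_true_iff]
  simp only [conceptsOfFactor, Finset.mem_image, Finset.mem_univ, true_and]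
  constructor
  · rintro ⟨_, ⟨l, rfl⟩, hi, hj⟩
    exact apply_eq_true_of_mem_dn I hi hj
  · intro hij
    obtain ⟨l, hil, hlj⟩ := bmul_eq_true_iff.1 (h ▸ hij)
    refine ⟨_, ⟨l, rfl⟩, subset_dn_up I _ (by simpa using hil), (mem_up I).2 fun i' hi' => ?_⟩
    exact h ▸ bmul_eq_true_iff.2 ⟨l, by simpa using hi', hlj⟩

lemma exists_concepts_card_eq_rankB_cov_eq :
    ∃ F : Finset (Finset (Fin n) × Finset (Fin m)),
      (∀ p ∈ F, isConcept I p) ∧ F.card = rankB I ∧ cov F = I := by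
  obtain ⟨A, B, hAB⟩ := exists_bmul_eq_of_rankB I
  have hcov := cov_conceptsOfFactor I hAB
  refine ⟨conceptsOfFactor I A, ?_, ?_, hcov⟩
  · simp only [conceptsOfFactor, Finset.mem_image]
    rintro _ ⟨l, -, rfl⟩
    exact isConcept_dn_up I _
  · exact (Finset.card_image_le.trans_eq (Finset.card_fin _)).antisymm
      (rankB_le_card_of_cov_eq hcov)

variable {I}

lemma exists_covered_only_by_of_card_eq_rankB {F : Finset (Finset (Fin n) × Finset (Fin m))}
    (hcard : F.card = rankB I) (hcov : cov F = I) {c : Finset (Fin n) × Finset (Fin m)}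
    (hc : c ∈ F) : ∃ i j, I i j = true ∧ ∀ d ∈ F, i ∈ d.1 → j ∈ d.2 → d = c := by
  by_contra! hredundant
  have hcov' : cov (F.erase c) = I := by
    funext i j
    rw [Bool.eq_iff_iff, cov_eq_true_iff]
    constructor
    · rintro ⟨d, hd, hi, hj⟩
      exact hcov ▸ cov_eq_true_iff.2 ⟨d, Finset.mem_of_mem_erase hd, hi, hj⟩
    · intro hij
      obtain ⟨d, hd, hi, hj, hdc⟩ := hredundant i j hij
      exact ⟨d, Finset.mem_erase.2 ⟨hdc, hd⟩, hi, hj⟩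
  have := rankB_le_card_of_cov_eq hcov'
  rw [Finset.card_erase_of_mem hc, hcard] at this
  have : 0 < rankB I := hcard ▸ Finset.card_pos.2 ⟨c, hc⟩
  omega

lemma mem_BE_of_covered_only_by {F : Finset (Finset (Fin n) × Finset (Fin m))}
    (hF : ∀ p ∈ F, isConcept I p) (hcov : cov F = I) {c : Finset (Fin n) × Finset (Fin m)}
    {i : Fin n} {j : Fin m} (hij : I i j = true) (honly : ∀ d ∈ F, i ∈ d.1 → j ∈ d.2 → d = c) :
    c ∈ BE I := by
  obtain ⟨e, f, hess, hsub⟩ :=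
    exists_ess_interval_subset I ((interval_singleton_nonempty_iff I).2 hij)
  have hef : I e f = true :=
    (interval_singleton_nonempty_iff I).1 ((ess_eq_true_iff I).1 hess).1
  obtain ⟨d, hd, he, hf⟩ := cov_eq_true_iff.1 (hcov ▸ hef)
  have hd_ef : d ∈ interval I {e} {f} := (mem_interval_singleton_iff I (hF d hd)).2 ⟨he, hf⟩
  obtain ⟨hi, hj⟩ := (mem_interval_singleton_iff I (hF d hd)).1 (hsub hd_ef)
  exact honly d hd hi hj ▸ ⟨e, f, hess, hd_ef⟩

end OptimalConceptFactorization

theorem optimal_factorization_within_BE {n m : ℕ} (I : Fin n → Fin m → Bool) :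
    ∃ F : Finset (Finset (Fin n) × Finset (Fin m)),
      (∀ p ∈ F, p ∈ BE I) ∧ F.card = rankB I ∧ ∀ i j, I i j = cov F i j := by
  obtain ⟨F, hconcepts, hcard, hcov⟩ := exists_concepts_card_eq_rankB_cov_eq I
  refine ⟨F, fun c hc => ?_, hcard, fun i j => by rw [hcov]⟩
  obtain ⟨i, j, hij, honly⟩ := exists_covered_only_by_of_card_eq_rankB hcard hcov hc
  exact mem_BE_of_covered_only_by hconcepts hcov hij honly
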